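/- arXiv:2602.05361 — 3 statements merged into one kernel-verified Lean document; each statement's English description precedes it below -/
import Mathlib

section
/- The function Ψ(x) = √(1 + x⁻² · ln((2x−1)/(2(x−1)))) − 1 is strictly decreasing on (1, +∞), tends to +∞ as x ↓ 1, and tends to 0 as x → +∞. Consequently, Ψ is a continuous strictly decreasing bijection from (1, +∞) onto (0, +∞), so for every m > 0 there is a unique p* ∈ (1, +∞) with Ψ(p*) = m. -/
open Filter

/-- `Ψ(x) = √(1 + x⁻² · ln((2x−1)/(2(x−1)))) − 1`. -/
noncomputable def Psi (x : ℝ) : ℝ :=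
  Real.sqrt (1 + (1 / x ^ 2) * Real.log ((2 * x - 1) / (2 * (x - 1)))) - 1

/-!
Since `(2x−1)/(2(x−1)) = 1 + (2(x−1))⁻¹`, this ratio decreases from `+∞` to `1` on `(1,∞)`.
Hence `x⁻² · log` of it is a product of two positive decreasing factors and runs from `+∞`
down to `0`, and so does `Ψ`. Continuity and the intermediate value theorem give surjectivity
onto `(0,∞)`, strict monotonicity gives injectivity.
-/

open Set Topology

section

variable {f : ℝ → ℝ} {a b : ℝ}

theorem StrictAntiOn.lt_of_tendsto_atTop (hf : StrictAntiOn f (Ioi a))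
    (hb : Tendsto f atTop (𝓝 b)) {x : ℝ} (hx : a < x) : b < f x := by
  have hle : b ≤ f (x + 1) := le_of_tendsto hb <| (eventually_ge_atTop (x + 1)).mono
    fun y hy => hf.antitoneOn (mem_Ioi.2 (by linarith)) (mem_Ioi.2 (by linarith)) hy
  exact hle.trans_lt (hf hx (mem_Ioi.2 (by linarith)) (by linarith))

theorem ContinuousOn.surjOn_Ioi_of_tendsto (hc : ContinuousOn f (Ioi a))
    (ha : Tendsto f (𝓝[>] a) atTop) (hb : Tendsto f atTop (𝓝 b)) :
    SurjOn f (Ioi a) (Ioi b) := by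
  intro m hm
  obtain ⟨x, hmx, hx⟩ := ((ha.eventually_gt_atTop m).and self_mem_nhdsWithin).exists
  obtain ⟨N, hN⟩ := (hb.eventually (eventually_lt_nhds hm)).exists_forall_of_atTop
  set y := max N (x + 1)
  have hxy : x < y := (lt_add_one x).trans_le (le_max_right _ _)
  have hsub : Icc x y ⊆ Ioi a := fun z hz => lt_of_lt_of_le hx hz.1
  obtain ⟨z, hz, rfl⟩ := intermediate_value_Icc' hxy.le (hc.mono hsub)
    ⟨(hN y (le_max_left _ _)).le, hmx.le⟩
  exact ⟨z, hsub hz, rfl⟩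

theorem StrictAntiOn.bijOn_Ioi_of_tendsto (hf : StrictAntiOn f (Ioi a))
    (hc : ContinuousOn f (Ioi a)) (ha : Tendsto f (𝓝[>] a) atTop)
    (hb : Tendsto f atTop (𝓝 b)) : BijOn f (Ioi a) (Ioi b) :=
  ⟨fun _ hx => hf.lt_of_tendsto_atTop hb hx, hf.injOn, hc.surjOn_Ioi_of_tendsto ha hb⟩

theorem Set.BijOn.existsUnique {α β : Type*} {g : α → β} {s : Set α} {t : Set β}
    (h : BijOn g s t) {y : β} (hy : y ∈ t) : ∃! x, x ∈ s ∧ g x = y := by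
  obtain ⟨x, hx, rfl⟩ := h.surjOn hy
  exact ⟨x, ⟨hx, rfl⟩, fun x' hx' => h.injOn hx'.1 hx hx'.2⟩

end

noncomputable def psiRatio (x : ℝ) : ℝ := (2 * x - 1) / (2 * (x - 1))

noncomputable def psiInner (x : ℝ) : ℝ := (1 / x ^ 2) * Real.log (psiRatio x)

theorem Psi_eq (x : ℝ) : Psi x = √(1 + psiInner x) - 1 := rfl

theorem psiRatio_eq_one_add_inv {x : ℝ} (hx : x ≠ 1) : psiRatio x = 1 + (2 * (x - 1))⁻¹ := by
  have : 2 * (x - 1) ≠ 0 := by intro h; apply hx; linarith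
  unfold psiRatio
  field_simp
  ring

theorem one_lt_psiRatio {x : ℝ} (hx : 1 < x) : 1 < psiRatio x := by
  rw [psiRatio_eq_one_add_inv hx.ne']
  have : 0 < 2 * (x - 1) := by linarith
  simpa using inv_pos.2 this

theorem strictAntiOn_psiRatio : StrictAntiOn psiRatio (Ioi 1) := by
  intro x (hx : 1 < x) y (hy : 1 < y) hxy
  rw [psiRatio_eq_one_add_inv hx.ne', psiRatio_eq_one_add_inv hy.ne']
  gcongr

theorem continuousOn_psiRatio : ContinuousOn psiRatio (Ioi 1) := by
  unfold psiRatio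
  fun_prop (disch := intro x (hx : 1 < x); linarith)

theorem tendsto_psiRatio_nhdsGT_one : Tendsto psiRatio (𝓝[>] 1) atTop := by
  have hden : Tendsto (fun x : ℝ => 2 * (x - 1)) (𝓝[>] 1) (𝓝[>] 0) := by
    refine tendsto_nhdsWithin_of_tendsto_nhds_of_eventually_within _ ?_ ?_
    · simpa using (Continuous.tendsto (by fun_prop : Continuous fun x : ℝ => 2 * (x - 1)) 1)
        |>.mono_left nhdsWithin_le_nhds
    · filter_upwards [self_mem_nhdsWithin] with x (hx : 1 < x)
      exact mem_Ioi.2 (by linarith)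
  refine (tendsto_atTop_add_const_left _ 1 (tendsto_inv_nhdsGT_zero.comp hden)).congr' ?_
  filter_upwards [self_mem_nhdsWithin] with x (hx : 1 < x)
  exact (psiRatio_eq_one_add_inv hx.ne').symm

theorem tendsto_psiRatio_atTop : Tendsto psiRatio atTop (𝓝 1) := by
  have hinv : Tendsto (fun x : ℝ => (2 * (x - 1))⁻¹) atTop (𝓝 0) :=
    tendsto_inv_atTop_zero.comp <|
      (tendsto_atTop_add_const_right atTop (-1) tendsto_id).const_mul_atTop two_pos
  have h := (tendsto_const_nhds (x := (1 : ℝ))).add hinv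
  rw [add_zero] at h
  refine h.congr' ?_
  filter_upwards [eventually_gt_atTop 1] with x hx
  exact (psiRatio_eq_one_add_inv hx.ne').symm

theorem psiInner_pos {x : ℝ} (hx : 1 < x) : 0 < psiInner x :=
  mul_pos (by positivity) (Real.log_pos (one_lt_psiRatio hx))

theorem strictAntiOn_psiInner : StrictAntiOn psiInner (Ioi 1) := by
  intro x (hx : 1 < x) y (hy : 1 < y) hxy
  have hlog := Real.log_lt_log (by linarith [one_lt_psiRatio hy]) (strictAntiOn_psiRatio hx hy hxy)
  have hsq : 1 / y ^ 2 < 1 / x ^ 2 := by gcongr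
  exact mul_lt_mul'' hsq hlog (by positivity) (Real.log_pos (one_lt_psiRatio hy)).le

theorem continuousOn_psiInner : ContinuousOn psiInner (Ioi 1) := by
  refine ContinuousOn.mul ?_ (continuousOn_psiRatio.log fun x (hx : 1 < x) => ?_)
  · fun_prop (disch := intro x (hx : 1 < x); positivity)
  · linarith [one_lt_psiRatio hx]

theorem tendsto_psiInner_nhdsGT_one : Tendsto psiInner (𝓝[>] 1) atTop := by
  have hcoef : Tendsto (fun x : ℝ => 1 / x ^ 2) (𝓝[>] 1) (𝓝 1) := by
    simpa using (Continuous.tendsto (by fun_prop : Continuous fun x : ℝ => x ^ 2) 1).inv₀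
      (by norm_num) |>.mono_left nhdsWithin_le_nhds
  exact hcoef.pos_mul_atTop one_pos (Real.tendsto_log_atTop.comp tendsto_psiRatio_nhdsGT_one)

theorem tendsto_psiInner_atTop : Tendsto psiInner atTop (𝓝 0) := by
  have hcoef : Tendsto (fun x : ℝ => 1 / x ^ 2) atTop (𝓝 0) := by
    simpa [Function.comp_def] using tendsto_inv_atTop_zero.comp (tendsto_pow_atTop two_ne_zero)
  have := hcoef.mul ((Real.continuousAt_log one_ne_zero).tendsto.comp tendsto_psiRatio_atTop)
  rwa [Real.log_one, mul_zero] at this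

theorem strictAntiOn_Psi : StrictAntiOn Psi (Ioi 1) := by
  intro x hx y hy hxy
  have := psiInner_pos (mem_Ioi.1 hy)
  simp only [Psi_eq]
  gcongr
  exact strictAntiOn_psiInner hx hy hxy

theorem continuousOn_Psi : ContinuousOn Psi (Ioi 1) :=
  ((continuousOn_const.add continuousOn_psiInner).sqrt).sub continuousOn_const

theorem tendsto_Psi_nhdsGT_one : Tendsto Psi (𝓝[>] 1) atTop :=
  tendsto_atTop_add_const_right _ (-1) <|
    Real.tendsto_sqrt_atTop.comp <| tendsto_atTop_add_const_left _ 1 tendsto_psiInner_nhdsGT_one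

theorem tendsto_Psi_atTop : Tendsto Psi atTop (𝓝 0) := by
  have := ((tendsto_const_nhds (x := (1 : ℝ))).add tendsto_psiInner_atTop).sqrt.sub_const 1
  rwa [add_zero, Real.sqrt_one, sub_self] at this

/-- `Ψ` is strictly decreasing on `(1,∞)`, tends to `+∞` as `x ↓ 1` and to `0` as
`x → +∞`; it is a continuous strictly decreasing bijection from `(1,∞)` onto `(0,∞)`,
so every `m > 0` has a unique preimage `p* ∈ (1,∞)`. -/
theorem Psi_strictAnti_tendsto_bijective :
    StrictAntiOn Psi (Set.Ioi 1) ∧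
    ContinuousOn Psi (Set.Ioi 1) ∧
    Tendsto Psi (nhdsWithin 1 (Set.Ioi 1)) atTop ∧
    Tendsto Psi atTop (nhds 0) ∧
    Set.BijOn Psi (Set.Ioi 1) (Set.Ioi 0) ∧
    (∀ m : ℝ, 0 < m → ∃! x : ℝ, x ∈ Set.Ioi (1 : ℝ) ∧ Psi x = m) := by
  have hbij := strictAntiOn_Psi.bijOn_Ioi_of_tendsto continuousOn_Psi tendsto_Psi_nhdsGT_one
    tendsto_Psi_atTop
  exact ⟨strictAntiOn_Psi, continuousOn_Psi, tendsto_Psi_nhdsGT_one, tendsto_Psi_atTop, hbij,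
    fun _ hm => hbij.existsUnique hm⟩
end

section
/- For T > 0, define V : [0,T] × ℝ → ℝ by V(t,x) = arctan x for x ≤ 1, and V(t,x) = [x·e^{m(x)(t−T)}/(x − 1 + e^{m(x)(t−T)})]·arctan x for x > 1, where m(x) = x³/((1+x²)²·arctan x). Then V is continuous on [0,T] × ℝ; in particular, for each fixed t, V(t,x) → arctan 1 = π/4 as x → 1⁺. -/
open Filter

/-- `m(x) = x³/((1+x²)² arctan x)`. -/
noncomputable def mcoef (x : ℝ) : ℝ := x ^ 3 / ((1 + x ^ 2) ^ 2 * Real.arctan x)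

/-- The piecewise value function of Example 5.2. -/
noncomputable def Vex (T t x : ℝ) : ℝ :=
  if x ≤ 1 then Real.arctan x
  else (x * Real.exp (mcoef x * (t - T)) / (x - 1 + Real.exp (mcoef x * (t - T))))
    * Real.arctan x

lemma mcoef_continuousOn : ContinuousOn mcoef (Set.Ici 1) := by
  unfold mcoef
  apply ContinuousOn.div (by fun_prop)
    (((continuous_pow 2).comp (continuous_const.add (continuous_pow 2))).mul
      Real.continuous_arctan).continuousOn
  intro x hx
  have hx1 : (1:ℝ) ≤ x := hx
  have h1 : 0 < Real.arctan x := by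
    rw [← Real.arctan_zero]
    exact Real.arctan_strictMono (by linarith)
  have h2 : (0:ℝ) < (1 + x ^ 2) ^ 2 * Real.arctan x := by positivity
  simpa using ne_of_gt h2

lemma Gcont (T : ℝ) :
    ContinuousOn (fun p : ℝ × ℝ =>
      (p.2 * Real.exp (mcoef p.2 * (p.1 - T)) / (p.2 - 1 + Real.exp (mcoef p.2 * (p.1 - T))))
        * Real.arctan p.2) {p : ℝ × ℝ | 1 ≤ p.2} := by
  have hm : ContinuousOn (fun p : ℝ × ℝ => mcoef p.2) {p : ℝ × ℝ | 1 ≤ p.2} :=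
    mcoef_continuousOn.comp continuous_snd.continuousOn (fun p hp => hp)
  have hE : ContinuousOn (fun p : ℝ × ℝ => Real.exp (mcoef p.2 * (p.1 - T)))
      {p : ℝ × ℝ | 1 ≤ p.2} :=
    Real.continuous_exp.comp_continuousOn
      (hm.mul ((continuous_fst.sub continuous_const).continuousOn))
  apply ContinuousOn.mul _ (Real.continuous_arctan.comp continuous_snd).continuousOn
  apply ContinuousOn.div (continuous_snd.continuousOn.mul hE)
    (((continuous_snd.sub continuous_const).continuousOn).add hE)
  intro p hp
  have hp2 : (1:ℝ) ≤ p.2 := hp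
  have hEpos := Real.exp_pos (mcoef p.2 * (p.1 - T))
  have : (0:ℝ) < p.2 - 1 + Real.exp (mcoef p.2 * (p.1 - T)) := by linarith
  exact ne_of_gt this

/-- The value function `V` of Example 5.2 is continuous on `[0,T] × ℝ`; in particular,
for each fixed `t`, `V(t,x) → arctan 1 = π/4` as `x → 1⁺`. -/
theorem Vex_continuous (T : ℝ) (hT : 0 < T) :
    ContinuousOn (fun p : ℝ × ℝ => Vex T p.1 p.2) (Set.Icc 0 T ×ˢ Set.univ) ∧
    (∀ t : ℝ, Tendsto (fun x => Vex T t x) (nhdsWithin 1 (Set.Ioi 1))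
      (nhds (Real.pi / 4))) := by
  have hclos : closure {p : ℝ × ℝ | ¬ p.2 ≤ 1} ⊆ {p : ℝ × ℝ | 1 ≤ p.2} := by
    apply closure_minimal
    · intro p hp
      exact le_of_lt (not_le.mp hp)
    · exact isClosed_le continuous_const continuous_snd
  constructor
  · have huniv : ContinuousOn (fun p : ℝ × ℝ => Vex T p.1 p.2) Set.univ := by
      simp only [Vex]
      apply ContinuousOn.if
      · intro a ha
        have hfr : a ∈ frontier {p : ℝ × ℝ | p.2 ≤ (1:ℝ)} := ha.2
        have h1 : a.2 = 1 := by
          have := (frontier_le_subset_eq continuous_snd continuous_const) hfr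
          exact this
        have hE := Real.exp_pos (mcoef a.2 * (a.1 - T))
        rw [h1]
        rw [show (1:ℝ) - 1 + Real.exp (mcoef 1 * (a.1 - T))
            = Real.exp (mcoef 1 * (a.1 - T)) by ring]
        rw [one_mul, div_self (ne_of_gt (Real.exp_pos _)), one_mul]
      · exact (Real.continuous_arctan.comp continuous_snd).continuousOn
      · apply (Gcont T).mono
        intro p hp
        exact hclos hp.2
    exact huniv.mono (Set.subset_univ _)
  · intro t
    have h1 : ContinuousOn (fun x : ℝ =>
        (x * Real.exp (mcoef x * (t - T)) / (x - 1 + Real.exp (mcoef x * (t - T))))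
          * Real.arctan x) (Set.Ici 1) := by
      have := (Gcont T).comp (f := fun x : ℝ => ((t, x) : ℝ × ℝ))
        (continuous_const.prodMk continuous_id).continuousOn
        (fun x hx => hx)
      exact this
    have h2 := (h1 1 Set.self_mem_Ici).tendsto
    have hval : (1 * Real.exp (mcoef 1 * (t - T)) / (1 - 1 + Real.exp (mcoef 1 * (t - T))))
        * Real.arctan 1 = Real.pi / 4 := by
      rw [show (1:ℝ) - 1 + Real.exp (mcoef 1 * (t - T)) = Real.exp (mcoef 1 * (t - T)) by ring]
      rw [one_mul, div_self (ne_of_gt (Real.exp_pos _)), one_mul, Real.arctan_one]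
    rw [hval] at h2
    have h3 := h2.mono_left (nhdsWithin_mono 1 Set.Ioi_subset_Ici_self)
    apply h3.congr'
    filter_upwards [self_mem_nhdsWithin] with x hx
    have : ¬ x ≤ 1 := not_le.mpr hx
    simp [Vex, this]
end

section
/- Let T > 0, s ∈ [0,T], and let V(t,x) be as in Example 5.2: V(t,x) = arctan x for x ≤ 1 and V(t,x) = [x·e^{m(x)(t−T)}/(x−1+e^{m(x)(t−T)})]·arctan x for x > 1, with m(x) = x³/((1+x²)² arctan x). Then at x̂ = 1: the left x-derivative of V(s,·) at 1 is 1/2, the right x-derivative at 1 is 1/2 + (π/4)(1 − e^{(T−s)/π}) ≤ 1/2, the first-order superjet D_x^{1,+}V(s,1) = [1/2 + (π/4)(1 − e^{(T−s)/π}), 1/2], and the first-order subjet D_x^{1,−}V(s,1) is empty whenever s < T. -/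
/-- First-order superjet of `v(s,·)` at `x0`. -/
def Dx1plus (v : ℝ → ℝ → ℝ) (s x0 : ℝ) : Set ℝ :=
  {p | ∀ ε > 0, ∃ δ > 0, ∀ x, |x - x0| < δ →
    v s x ≤ v s x0 + p * (x - x0) + ε * |x - x0|}

/-- First-order subjet of `v(s,·)` at `x0`. -/
def Dx1minus (v : ℝ → ℝ → ℝ) (s x0 : ℝ) : Set ℝ :=
  {p | ∀ ε > 0, ∃ δ > 0, ∀ x, |x - x0| < δ →
    v s x ≥ v s x0 + p * (x - x0) - ε * |x - x0|}


/-!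
Left of `1` the function is `arctan`, with slope `1/2`. Right of `1` it is `q(x) arctan x` where
`q(x) = x e(x)/(x - 1 + e(x))` has `q(1) = 1` and `q'(1) = 1 - 1/e(1)`, whatever the derivative of
`e(x) = exp(m(x)(s - T))` is; with `m(1) = 1/π` this gives the right slope. For any function
with one-sided derivatives `dl` (left) and `dr` (right), comparing the jet inequalities with the
one-sided difference quotients shows that the superjet is `[dr, dl]` and the subjet is `[dl, dr]`,
so a concave kink `dr < dl` leaves the subjet empty.
-/

open Real Filter Topology Set

section Jets

variable {v : ℝ → ℝ → ℝ} {s x0 p dl dr : ℝ}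

theorem mem_Dx1plus_iff_eventually :
    p ∈ Dx1plus v s x0 ↔
      ∀ ε > 0, ∀ᶠ x in 𝓝 x0, v s x ≤ v s x0 + p * (x - x0) + ε * |x - x0| := by
  simp only [Dx1plus, mem_ofPred_eq, Metric.eventually_nhds_iff, Real.dist_eq]

theorem mem_Dx1minus_iff_neg_mem_Dx1plus : p ∈ Dx1minus v s x0 ↔ -p ∈ Dx1plus (-v) s x0 := by
  simp only [Dx1minus, Dx1plus, mem_ofPred_eq, Pi.neg_apply, neg_mul]
  refine forall₂_congr fun ε _ => exists_congr fun δ => and_congr_right fun _ =>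
    forall₂_congr fun x _ => ?_
  constructor <;> intro h <;> linarith

theorem mem_Dx1plus_iff_slope :
    p ∈ Dx1plus v s x0 ↔ ∀ ε > 0,
      (∀ᶠ x in 𝓝[<] x0, p - ε ≤ slope (v s) x0 x) ∧ ∀ᶠ x in 𝓝[>] x0, slope (v s) x0 x ≤ p + ε := by
  rw [mem_Dx1plus_iff_eventually, ← nhdsNE_sup_pure, ← nhdsLT_sup_nhdsGT]
  refine forall₂_congr fun ε _ => ?_
  simp only [eventually_sup, eventually_pure, sub_self, mul_zero, abs_zero, add_zero, le_refl,
    and_true]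
  refine and_congr (eventually_congr ?_) (eventually_congr ?_)
  · filter_upwards [self_mem_nhdsWithin] with x (hx : x < x0)
    rw [slope_def_field, le_div_iff_of_neg (sub_neg.2 hx), abs_of_neg (sub_neg.2 hx)]
    constructor <;> intro h <;> linarith
  · filter_upwards [self_mem_nhdsWithin] with x (hx : x0 < x)
    rw [slope_def_field, div_le_iff₀ (sub_pos.2 hx), abs_of_pos (sub_pos.2 hx)]
    constructor <;> intro h <;> linarith

theorem Dx1plus_eq_Icc (hl : HasDerivWithinAt (v s) dl (Iic x0) x0)
    (hr : HasDerivWithinAt (v s) dr (Ici x0) x0) : Dx1plus v s x0 = Icc dr dl := by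
  have hl' : Tendsto (slope (v s) x0) (𝓝[<] x0) (𝓝 dl) := by
    simpa using hasDerivWithinAt_iff_tendsto_slope.1 hl
  have hr' : Tendsto (slope (v s) x0) (𝓝[>] x0) (𝓝 dr) := by
    simpa using hasDerivWithinAt_iff_tendsto_slope.1 hr
  ext p
  rw [mem_Dx1plus_iff_slope, mem_Icc]
  constructor
  · intro hp
    refine ⟨le_of_forall_pos_le_add fun ε hε => ?_, ?_⟩
    · exact le_of_tendsto hr' (hp ε hε).2
    · refine le_of_forall_pos_le_add fun ε hε => ?_
      have := ge_of_tendsto hl' (hp ε hε).1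
      linarith
  · rintro ⟨hrp, hpl⟩ ε hε
    exact ⟨(hl'.eventually_const_lt (by linarith)).mono fun _ => le_of_lt,
      (hr'.eventually_lt_const (by linarith)).mono fun _ => le_of_lt⟩

theorem Dx1minus_eq_Icc (hl : HasDerivWithinAt (v s) dl (Iic x0) x0)
    (hr : HasDerivWithinAt (v s) dr (Ici x0) x0) : Dx1minus v s x0 = Icc dl dr := by
  ext p
  rw [mem_Dx1minus_iff_neg_mem_Dx1plus, Dx1plus_eq_Icc hl.neg hr.neg, mem_Icc, mem_Icc,
    neg_le_neg_iff, neg_le_neg_iff, and_comm]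

end Jets

/-- The derivative of `e` cancels: only the value `e 1` enters. -/
theorem hasDerivAt_mul_div_sub_one_add {e : ℝ → ℝ} {e' : ℝ} (he : HasDerivAt e e' 1)
    (he1 : e 1 ≠ 0) :
    HasDerivAt (fun x => x * e x / (x - 1 + e x)) (1 - (e 1)⁻¹) 1 := by
  have hden : (1 : ℝ) - 1 + e 1 = e 1 := by ring
  have h := ((hasDerivAt_id' 1).mul he).div (((hasDerivAt_id' 1).sub_const 1).add he)
    (by simpa only [Pi.add_apply, hden])
  refine h.congr_deriv ?_
  simp only [Pi.add_apply, Pi.mul_apply, hden]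
  field_simp
  ring

theorem mcoef_one : mcoef 1 = π⁻¹ := by
  norm_num [mcoef, arctan_one]

theorem differentiableAt_mcoef {x : ℝ} (hx : x ≠ 0) : DifferentiableAt ℝ mcoef x := by
  have harctan : arctan x ≠ 0 := arctan_eq_zero_iff.not.2 hx
  have := differentiable_arctan
  unfold mcoef
  fun_prop (disch := positivity)

theorem Vex_of_le_one {T t x : ℝ} (hx : x ≤ 1) : Vex T t x = arctan x := if_pos hx

theorem hasDerivWithinAt_Vex_Iic_one (T t : ℝ) :
    HasDerivWithinAt (Vex T t) (1 / 2) (Iic 1) 1 := by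
  have h := (hasDerivAt_arctan 1).hasDerivWithinAt (s := Iic 1)
  norm_num at h
  exact h.congr (fun x hx => Vex_of_le_one hx) (Vex_of_le_one le_rfl)

theorem hasDerivWithinAt_Vex_Ici_one (T t : ℝ) :
    HasDerivWithinAt (Vex T t) (1 / 2 + π / 4 * (1 - exp ((T - t) / π))) (Ici 1) 1 := by
  set e : ℝ → ℝ := fun x => exp (mcoef x * (t - T)) with he_def
  have he : HasDerivAt e _ 1 :=
    (((differentiableAt_mcoef one_ne_zero).hasDerivAt).mul_const (t - T)).exp
  have he0 : e 1 ≠ 0 := exp_ne_zero _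
  have he1 : (e 1)⁻¹ = exp ((T - t) / π) := by
    rw [he_def, ← exp_neg, mcoef_one]
    ring_nf
  have hq1 : 1 * e 1 / (1 - 1 + e 1) = 1 := by rw [sub_self, zero_add, one_mul, div_self he0]
  have hV1 : Vex T t 1 = (1 * e 1 / (1 - 1 + e 1)) * arctan 1 := by
    rw [Vex_of_le_one le_rfl, hq1, one_mul]
  have h := ((hasDerivAt_mul_div_sub_one_add he he0).mul
    (hasDerivAt_arctan 1)).hasDerivWithinAt (s := Ici 1)
  refine (h.congr (fun x hx => ?_) hV1).congr_deriv ?_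
  · rcases (mem_Ici.1 hx).eq_or_lt with rfl | hx
    · exact hV1
    · exact if_neg (not_le.2 hx)
  · rw [he1, hq1, arctan_one]
    ring

theorem Vex_jets_at_one_general (T s : ℝ) (hs : s ∈ Set.Icc 0 T) :
    HasDerivWithinAt (fun x => Vex T s x) (1 / 2) (Set.Iic 1) 1 ∧
    HasDerivWithinAt (fun x => Vex T s x)
      (1 / 2 + Real.pi / 4 * (1 - Real.exp ((T - s) / Real.pi))) (Set.Ici 1) 1 ∧
    (1 / 2 + Real.pi / 4 * (1 - Real.exp ((T - s) / Real.pi)) ≤ 1 / 2) ∧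
    Dx1plus (Vex T) s 1
      = Set.Icc (1 / 2 + Real.pi / 4 * (1 - Real.exp ((T - s) / Real.pi))) (1 / 2) ∧
    (s < T → Dx1minus (Vex T) s 1 = ∅) := by
  have hl := hasDerivWithinAt_Vex_Iic_one T s
  have hr := hasDerivWithinAt_Vex_Ici_one T s
  refine ⟨hl, hr, ?_, Dx1plus_eq_Icc hl hr, fun hsT => ?_⟩
  · have : 1 ≤ exp ((T - s) / π) := one_le_exp (div_nonneg (sub_nonneg.2 hs.2) pi_pos.le)
    nlinarith [pi_pos]
  · rw [Dx1minus_eq_Icc hl hr, Icc_eq_empty_iff, not_le]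
    have : 1 < exp ((T - s) / π) := one_lt_exp_iff.2 (div_pos (sub_pos.2 hsT) pi_pos)
    nlinarith [pi_pos]

/-- At `x̂ = 1`, the left `x`-derivative of `V(s,·)` is `1/2`, the right `x`-derivative is
`1/2 + (π/4)(1 − e^{(T−s)/π}) ≤ 1/2`,
`D_x^{1,+}V(s,1) = [1/2 + (π/4)(1 − e^{(T−s)/π}), 1/2]`, and for `s < T` the subjet
`D_x^{1,−}V(s,1)` is empty. -/
theorem Vex_jets_at_one (T s : ℝ) (hT : 0 < T) (hs : s ∈ Set.Icc 0 T) :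
    HasDerivWithinAt (fun x => Vex T s x) (1 / 2) (Set.Iic 1) 1 ∧
    HasDerivWithinAt (fun x => Vex T s x)
      (1 / 2 + Real.pi / 4 * (1 - Real.exp ((T - s) / Real.pi))) (Set.Ici 1) 1 ∧
    (1 / 2 + Real.pi / 4 * (1 - Real.exp ((T - s) / Real.pi)) ≤ 1 / 2) ∧
    Dx1plus (Vex T) s 1
      = Set.Icc (1 / 2 + Real.pi / 4 * (1 - Real.exp ((T - s) / Real.pi))) (1 / 2) ∧
    (s < T → Dx1minus (Vex T) s 1 = ∅) :=
  Vex_jets_at_one_general T s hs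
end
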